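/- Let X = ℝ² equipped with the supremum norm ‖(a,b)‖ = max(|a|, |b|), and let Ω = {(z₁, z₂) ∈ ℝ² : z₂ < 0}. Then the quasihyperbolic distance between a = (−1,−2) and b = (1,−2) satisfies k_Ω(a, b) ≤ log(9/4) < 1; in particular, the broken line through c = (0,−3), consisting of the segments [a,c] and [c,b], has quasihyperbolic length 2·∫₀¹ 1/(3 − t) dt = log(9/4). -/

import Mathlib

/-!
The broken line is not `C¹`, so it is not itself admissible for `k_Ω`. Writing it as
`t ↦ (s, -3 + |s|)` with `s = 2t - 1` and rounding off its corner by replacing `|s|` with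
`√(s² + ε²)` gives `C¹` paths whose sup-norm speed is still at most `2` (the horizontal speed
dominates) and whose distance `≥ -z₂` to the boundary only drops from `3 - |s|` to at least
`(1 - ε/2)(3 - |s|)`. Hence their quasihyperbolic lengths are at most `(1 - ε/2)⁻¹` times
`∫₀¹ 2 / (3 - |2t - 1|) dt`, which by the symmetry `s ↦ -s` equals
`2 ∫₀¹ dt / (3 - t) = log (9/4)`; let `ε → 0`.
-/

/-- The quasihyperbolic length of a path `γ` on `[a,b]` in a domain `Ω`:
`ℓ_k(γ) = ∫ₐᵇ ‖γ′(t)‖ / d(γ(t)) dt`, where `d(x) = dist(x, X ∖ Ω)`. -/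
noncomputable def qhLength {X : Type*} [NormedAddCommGroup X] [NormedSpace ℝ X]
    (Ω : Set X) (γ : ℝ → X) (a b : ℝ) : ℝ :=
  ∫ t in a..b, ‖deriv γ t‖ / Metric.infDist (γ t) Ωᶜ

/-- The quasihyperbolic distance on a domain `Ω`: the infimum of quasihyperbolic lengths
over continuously differentiable paths in `Ω` joining the two points. -/
noncomputable def qhDist {X : Type*} [NormedAddCommGroup X] [NormedSpace ℝ X]
    (Ω : Set X) (x y : X) : ℝ :=
  sInf ((fun γ : ℝ → X => qhLength Ω γ 0 1) ''
    {γ | ContDiff ℝ 1 γ ∧ Set.MapsTo γ (Set.Icc 0 1) Ω ∧ γ 0 = x ∧ γ 1 = y})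

/-- The broken line from `a = (−1,−2)` through `c = (0,−3)` to `b = (1,−2)`,
parameterized over `[0,1]`. -/
noncomputable def brokenLine : ℝ → (Fin 2 → ℝ) := fun t =>
  if t ≤ 1 / 2 then ![-1 + 2 * t, -2 - 2 * t] else ![2 * t - 1, -4 + 2 * t]

open Real Set Filter Topology MeasureTheory intervalIntegral

section QuasihyperbolicDistance

variable {X : Type*} [NormedAddCommGroup X] [NormedSpace ℝ X]

lemma qhLength_nonneg (Ω : Set X) (γ : ℝ → X) {a b : ℝ} (hab : a ≤ b) :
    0 ≤ qhLength Ω γ a b :=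
  integral_nonneg hab fun _ _ => div_nonneg (norm_nonneg _) Metric.infDist_nonneg

lemma qhDist_le_qhLength {Ω : Set X} {γ : ℝ → X} (hγ : ContDiff ℝ 1 γ)
    (hγΩ : MapsTo γ (Icc 0 1) Ω) : qhDist Ω (γ 0) (γ 1) ≤ qhLength Ω γ 0 1 :=
  csInf_le ⟨0, by rintro _ ⟨δ, -, rfl⟩; exact qhLength_nonneg Ω δ zero_le_one⟩
    ⟨γ, ⟨hγ, hγΩ, rfl, rfl⟩, rfl⟩

end QuasihyperbolicDistance

lemma neg_le_infDist_compl_setOf_neg {ι : Type*} [Fintype ι] (i : ι) (z : ι → ℝ) :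
    -z i ≤ Metric.infDist z {w : ι → ℝ | w i < 0}ᶜ := by
  rw [Metric.le_infDist ⟨0, by simp⟩]
  intro w hw
  simp only [mem_compl_iff, mem_ofPred_eq, not_lt] at hw
  calc -z i ≤ |z i - w i| := by rw [abs_sub_comm]; linarith [le_abs_self (w i - z i)]
    _ = dist (z i) (w i) := (Real.dist_eq _ _).symm
    _ ≤ dist z w := dist_le_pi_dist z w i

lemma abs_two_mul_sub_one_le_one {t : ℝ} (ht : t ∈ Icc (0 : ℝ) 1) : |2 * t - 1| ≤ 1 :=
  abs_le.2 ⟨by linarith [ht.1], by linarith [ht.2]⟩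

lemma ContinuousOn.comp_abs_two_mul_sub_one {f : ℝ → ℝ} (hf : ContinuousOn f (Icc 0 1)) :
    ContinuousOn (fun t => f |2 * t - 1|) (Icc 0 1) :=
  hf.comp (by fun_prop) fun t ht =>
    ⟨abs_nonneg _, abs_two_mul_sub_one_le_one ht⟩

lemma integral_comp_abs_two_mul_sub_one {f : ℝ → ℝ} (hf : ContinuousOn f (Icc 0 1)) :
    ∫ t in (0 : ℝ)..1, f |2 * t - 1| = ∫ t in (0 : ℝ)..1, f t := by
  have hcont := hf.comp_abs_two_mul_sub_one
  rw [← integral_add_adjacent_intervals (b := 1 / 2)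
    ((hcont.mono (Icc_subset_Icc_right (by norm_num))).intervalIntegrable_of_Icc (by norm_num))
    ((hcont.mono (Icc_subset_Icc_left (by norm_num))).intervalIntegrable_of_Icc (by norm_num))]
  have hleft :
      ∫ t in (0 : ℝ)..1 / 2, f |2 * t - 1| = ∫ t in (0 : ℝ)..1 / 2, f (1 - 2 * t) :=
    integral_congr fun t ht => by
      rw [uIcc_of_le (by norm_num)] at ht
      rw [abs_of_nonpos (by linarith [ht.2]), neg_sub]
  have hright :
      ∫ t in (1 / 2 : ℝ)..1, f |2 * t - 1| = ∫ t in (1 / 2 : ℝ)..1, f (2 * t - 1) :=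
    integral_congr fun t ht => by
      rw [uIcc_of_le (by norm_num)] at ht
      rw [abs_of_nonneg (by linarith [ht.1])]
  rw [hleft, hright, integral_comp_sub_mul f two_ne_zero, integral_comp_mul_sub f two_ne_zero]
  norm_num
  ring

lemma integral_one_div_sub {c : ℝ} (hc : 1 < c) :
    ∫ t in (0 : ℝ)..1, 1 / (c - t) = log (c / (c - 1)) := by
  rw [integral_comp_sub_left (fun x => 1 / x), integral_one_div, sub_zero]
  rw [uIcc_of_le (by linarith)]
  exact fun h => by linarith [h.1]

lemma continuousOn_two_div_three_sub : ContinuousOn (fun u : ℝ => 2 / (3 - u)) (Icc 0 1) :=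
  continuousOn_const.div (by fun_prop) fun u hu => by linarith [hu.2]

lemma neg_brokenLine_one (t : ℝ) : -brokenLine t 1 = 3 - |2 * t - 1| := by
  unfold brokenLine
  split_ifs with h
  · rw [abs_of_nonpos (by linarith)]
    simp only [Matrix.cons_val_one, Matrix.cons_val_fin_one]
    ring
  · rw [abs_of_pos (by linarith)]
    simp only [Matrix.cons_val_one, Matrix.cons_val_fin_one]
    ring

lemma norm_deriv_brokenLine {t : ℝ} (ht : t ≠ 1 / 2) : ‖deriv brokenLine t‖ = 2 := by
  obtain ⟨p, v, hv, hpv⟩ :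
      ∃ p v : Fin 2 → ℝ, ‖v‖ = 2 ∧ brokenLine =ᶠ[𝓝 t] fun s => p + s • v := by
    rcases ht.lt_or_gt with h | h
    · refine ⟨![-1, -2], ![2, -2], by simp [Pi.norm_def, Fin.univ_succ], ?_⟩
      filter_upwards [Iio_mem_nhds h] with s hs
      rw [brokenLine, if_pos (mem_Iio.1 hs).le, Matrix.smul_vec2, Matrix.vec2_add]
      ring_nf
    · refine ⟨![-1, -4], ![2, 2], by simp [Pi.norm_def, Fin.univ_succ], ?_⟩
      filter_upwards [Ioi_mem_nhds h] with s hs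
      rw [brokenLine, if_neg (not_le.2 (mem_Ioi.1 hs)), Matrix.smul_vec2, Matrix.vec2_add]
      ring_nf
  rw [hpv.deriv_eq, (((hasDerivAt_id' t).smul_const v).const_add p).deriv, one_smul, hv]

lemma integral_brokenLine :
    ∫ t in (0 : ℝ)..1, ‖deriv brokenLine t‖ / -brokenLine t 1 =
      ∫ t in (0 : ℝ)..1, 2 / (3 - |2 * t - 1|) := by
  refine integral_congr_ae ?_
  filter_upwards [compl_mem_ae_iff.2 (measure_singleton (1 / 2 : ℝ))] with t ht _
  rw [norm_deriv_brokenLine ht, neg_brokenLine_one]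

noncomputable def smoothedBrokenLine (ε t : ℝ) : Fin 2 → ℝ :=
  ![2 * t - 1, √((2 * t - 1) ^ 2 + ε ^ 2) - √(1 + ε ^ 2) - 2]

section SmoothedBrokenLine

variable {ε : ℝ}

lemma smoothedBrokenLine_zero (ε : ℝ) : smoothedBrokenLine ε 0 = ![-1, -2] := by
  ext i; fin_cases i <;> norm_num [smoothedBrokenLine]

lemma smoothedBrokenLine_one (ε : ℝ) : smoothedBrokenLine ε 1 = ![1, -2] := by
  ext i; fin_cases i <;> norm_num [smoothedBrokenLine]

lemma contDiff_smoothedBrokenLine (hε : ε ≠ 0) : ContDiff ℝ 1 (smoothedBrokenLine ε) := by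
  have : ContDiff ℝ 1 fun t : ℝ => √((2 * t - 1) ^ 2 + ε ^ 2) :=
    ContDiff.sqrt (by fun_prop) fun t => by positivity
  refine contDiff_pi.2 (Fin.forall_fin_two.2 ⟨?_, ?_⟩) <;>
    simp only [smoothedBrokenLine, Matrix.cons_val_zero, Matrix.cons_val_one] <;> fun_prop

lemma hasDerivAt_smoothedBrokenLine (hε : ε ≠ 0) (t : ℝ) :
    HasDerivAt (smoothedBrokenLine ε)
      ![2, 2 * (2 * t - 1) / √((2 * t - 1) ^ 2 + ε ^ 2)] t := by
  have hs : HasDerivAt (fun s : ℝ => 2 * s - 1) 2 t := by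
    simpa using ((hasDerivAt_id t).const_mul 2).sub_const 1
  have hq : HasDerivAt (fun s : ℝ => (2 * s - 1) ^ 2 + ε ^ 2) (2 * (2 * t - 1) * 2) t := by
    refine ((hs.fun_pow 2).add_const (ε ^ 2)).congr_deriv ?_
    norm_num
  have hpos : 0 < √((2 * t - 1) ^ 2 + ε ^ 2) := sqrt_pos.2 (by positivity)
  refine hasDerivAt_pi.2 (Fin.forall_fin_two.2 ⟨?_, ?_⟩) <;>
    simp only [smoothedBrokenLine, Matrix.cons_val_zero, Matrix.cons_val_one]
  · exact hs
  · convert ((hq.sqrt (by positivity)).sub_const √(1 + ε ^ 2)).sub_const 2 using 1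
    field_simp

lemma norm_deriv_smoothedBrokenLine_le (hε : ε ≠ 0) (t : ℝ) :
    ‖deriv (smoothedBrokenLine ε) t‖ ≤ 2 := by
  rw [(hasDerivAt_smoothedBrokenLine hε t).deriv, pi_norm_le_iff_of_nonneg zero_le_two,
    Fin.forall_fin_two]
  have hpos : 0 < √((2 * t - 1) ^ 2 + ε ^ 2) := sqrt_pos.2 (by positivity)
  have hle : |2 * t - 1| ≤ √((2 * t - 1) ^ 2 + ε ^ 2) := abs_le_sqrt (by nlinarith)
  refine ⟨by simp, ?_⟩
  simp only [Matrix.cons_val_one, Matrix.cons_val_zero, Real.norm_eq_abs, abs_div, abs_mul,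
    abs_two, abs_of_pos hpos]
  rw [div_le_iff₀ hpos]
  linarith

lemma mul_three_sub_abs_le_neg_smoothedBrokenLine (hε : 0 ≤ ε) {t : ℝ}
    (ht : t ∈ Icc (0 : ℝ) 1) :
    (1 - ε / 2) * (3 - |2 * t - 1|) ≤ -smoothedBrokenLine ε t 1 := by
  have h1 : 1 ≤ √(1 + ε ^ 2) := one_le_sqrt.2 (by nlinarith)
  have h2 : √((2 * t - 1) ^ 2 + ε ^ 2) ≤ |2 * t - 1| + ε :=
    sqrt_le_iff.2 ⟨by positivity, by nlinarith [sq_abs (2 * t - 1), abs_nonneg (2 * t - 1)]⟩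
  have h3 := abs_two_mul_sub_one_le_one ht
  simp only [smoothedBrokenLine, Matrix.cons_val_one, Matrix.cons_val_zero]
  nlinarith [mul_nonneg hε (sub_nonneg.2 h3)]

lemma mapsTo_smoothedBrokenLine (hε₀ : 0 ≤ ε) (hε₂ : ε < 2) :
    MapsTo (smoothedBrokenLine ε) (Icc 0 1) {z : Fin 2 → ℝ | z 1 < 0} := fun t ht => by
  have := mul_three_sub_abs_le_neg_smoothedBrokenLine hε₀ ht
  have := abs_two_mul_sub_one_le_one ht
  simp only [mem_ofPred_eq]
  nlinarith

lemma qhLength_smoothedBrokenLine_le (hε₀ : 0 < ε) (hε₂ : ε < 2) :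
    qhLength {z : Fin 2 → ℝ | z 1 < 0} (smoothedBrokenLine ε) 0 1 ≤
      (1 - ε / 2)⁻¹ * ∫ t in (0 : ℝ)..1, 2 / (3 - |2 * t - 1|) := by
  rw [qhLength, ← intervalIntegral.integral_const_mul, integral_of_le zero_le_one,
    integral_of_le zero_le_one]
  refine integral_mono_of_nonneg
    (ae_of_all _ fun t => div_nonneg (norm_nonneg _) Metric.infDist_nonneg) ?_ ?_
  · exact ((continuousOn_two_div_three_sub.comp_abs_two_mul_sub_one.const_smul
      (1 - ε / 2)⁻¹).integrableOn_Icc.mono_set Ioc_subset_Icc_self)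
  refine (ae_restrict_iff' measurableSet_Ioc).2 (ae_of_all _ fun t ht => ?_)
  have ht := Ioc_subset_Icc_self ht
  have hpos : 0 < (1 - ε / 2) * (3 - |2 * t - 1|) :=
    mul_pos (by linarith) (by linarith [abs_two_mul_sub_one_le_one ht])
  calc ‖deriv (smoothedBrokenLine ε) t‖ /
        Metric.infDist (smoothedBrokenLine ε t) {z | z 1 < 0}ᶜ
      ≤ 2 / ((1 - ε / 2) * (3 - |2 * t - 1|)) :=
        div_le_div₀ zero_le_two (norm_deriv_smoothedBrokenLine_le hε₀.ne' t) hpos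
          ((mul_three_sub_abs_le_neg_smoothedBrokenLine hε₀.le ht).trans
            (neg_le_infDist_compl_setOf_neg 1 _))
    _ = (1 - ε / 2)⁻¹ * (2 / (3 - |2 * t - 1|)) := by
      rw [mul_comm, ← div_div, div_eq_inv_mul]

end SmoothedBrokenLine

lemma qhDist_halfPlane_le :
    qhDist {z : Fin 2 → ℝ | z 1 < 0} ![-1, -2] ![1, -2] ≤
      ∫ t in (0 : ℝ)..1, 2 / (3 - |2 * t - 1|) := by
  set L := ∫ t in (0 : ℝ)..1, 2 / (3 - |2 * t - 1|)
  have hbound : ∀ ε ∈ Ioo (0 : ℝ) 2,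
      qhDist {z : Fin 2 → ℝ | z 1 < 0} ![-1, -2] ![1, -2] ≤ (1 - ε / 2)⁻¹ * L := by
    intro ε hε
    rw [← smoothedBrokenLine_zero ε, ← smoothedBrokenLine_one ε]
    exact (qhDist_le_qhLength (contDiff_smoothedBrokenLine hε.1.ne')
      (mapsTo_smoothedBrokenLine hε.1.le hε.2)).trans (qhLength_smoothedBrokenLine_le hε.1 hε.2)
  have hlim : Tendsto (fun ε : ℝ => (1 - ε / 2)⁻¹ * L) (𝓝[>] 0) (𝓝 L) := by
    have : ContinuousAt (fun ε : ℝ => (1 - ε / 2)⁻¹ * L) 0 := by fun_prop (disch := norm_num)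
    simpa using this.tendsto.mono_left nhdsWithin_le_nhds
  exact ge_of_tendsto hlim (eventually_of_mem (Ioo_mem_nhdsGT two_pos) hbound)

lemma log_nine_div_four_lt_one : log (9 / 4) < 1 :=
  (log_lt_iff_lt_exp (by norm_num)).2 (by linarith [exp_one_gt_d9])

/-- In `ℝ²` with the supremum norm (here `Fin 2 → ℝ` with the sup norm) and the lower
half-plane `Ω = {z : z₂ < 0}` (for which `d(z) = −z₂`): the quasihyperbolic distance
between `a = (−1,−2)` and `b = (1,−2)` is at most `log(9/4) < 1`; in particular the
broken line through `c = (0,−3)` has quasihyperbolic length `2·∫₀¹ 1/(3−t) dt = log(9/4)`. -/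
theorem qhDist_halfPlane_sup_brokenLine :
    qhDist {z : Fin 2 → ℝ | z 1 < 0} ![-1, -2] ![1, -2] ≤ Real.log (9 / 4) ∧
    Real.log (9 / 4) < 1 ∧
    (∫ t in (0 : ℝ)..1, ‖deriv brokenLine t‖ / (-(brokenLine t 1))) =
      2 * ∫ t in (0 : ℝ)..1, 1 / (3 - t) ∧
    (2 * ∫ t in (0 : ℝ)..1, 1 / (3 - t)) = Real.log (9 / 4) := by
  have hfold :
      ∫ t in (0 : ℝ)..1, 2 / (3 - |2 * t - 1|) = 2 * ∫ t in (0 : ℝ)..1, 1 / (3 - t) := by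
    rw [integral_comp_abs_two_mul_sub_one continuousOn_two_div_three_sub,
      ← intervalIntegral.integral_const_mul]
    simp only [mul_one_div]
  have hlog : 2 * ∫ t in (0 : ℝ)..1, 1 / (3 - t) = log (9 / 4) := by
    rw [integral_one_div_sub (by norm_num), show (9 / 4 : ℝ) = (3 / (3 - 1)) ^ 2 by norm_num,
      log_pow]
    norm_num
  exact ⟨qhDist_halfPlane_le.trans_eq (hfold.trans hlog), log_nine_div_four_lt_one,
    integral_brokenLine.trans hfold, hlog⟩
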